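/- Let A and B be n × n real positive definite matrices. Then the minimum over orthogonal matrices Q ∈ O(n) of ‖A^{1/2} − Q B^{1/2}‖_F² equals Tr(A) + Tr(B) − 2 Tr((A^{1/2} B A^{1/2})^{1/2}), where M^{1/2} denotes the positive semidefinite square root of M and ‖·‖_F is the Frobenius norm. In particular, the minimum is attained at Q* = (A^{1/2} B A^{1/2})^{−1/2} A^{1/2} B^{1/2}. -/

import Mathlib

open Matrix
open scoped Classical

/-- The positive semidefinite square root of a positive semidefinite matrix
(junk value `0` if the matrix is not positive semidefinite). -/
noncomputable def matSqrt {n : ℕ} (A : Matrix (Fin n) (Fin n) ℝ) :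
    Matrix (Fin n) (Fin n) ℝ :=
  if hA : A.PosSemidef then
    (hA.isHermitian.eigenvectorUnitary : Matrix (Fin n) (Fin n) ℝ) *
      diagonal ((↑) ∘ (Real.sqrt ·) ∘ hA.isHermitian.eigenvalues) *
      (star hA.isHermitian.eigenvectorUnitary : Matrix (Fin n) (Fin n) ℝ)
  else 0

/-- The Frobenius norm of a real matrix, `‖M‖_F = √(Tr(MᵀM))`. -/
noncomputable def frobNorm {n : ℕ} (M : Matrix (Fin n) (Fin n) ℝ) : ℝ :=
  Real.sqrt (Mᵀ * M).trace

/-!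
With `X = S Tᵀ`, expanding the square gives
`‖S - Q T‖_F² = Tr(SᵀS) + Tr(TᵀT) - 2 Tr(Q Xᵀ)`, so one has to maximise `Tr(Q Xᵀ)` over orthogonal
`Q`. If `R ⪰ 0` is invertible with `R² = X Xᵀ`, then the polar factor `Q₀ = R⁻¹ X` is orthogonal
and `Xᵀ = Q₀ᵀ R`, so `Tr(Q Xᵀ) = Tr(R (Q Q₀ᵀ)) ≤ Tr R`, with equality at `Q = Q₀`. The inequality
`Tr(P W) ≤ Tr P` for `P ⪰ 0` and orthogonal `W` holds because
`2 (Tr P - Tr(P W)) = Tr((1 - W)ᵀ P (1 - W)) ≥ 0`.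
For `S = A^{1/2}` and `T = B^{1/2}` one has `X Xᵀ = A^{1/2} B A^{1/2}`.
-/

section OrthogonalTrace

theorem Matrix.PosSemidef.transpose_eq {ι : Type*} {P : Matrix ι ι ℝ} (hP : P.PosSemidef) :
    Pᵀ = P := by
  simpa only [conjTranspose_eq_transpose_of_trivial] using hP.isHermitian.eq

variable {ι : Type*} [Fintype ι] [DecidableEq ι]

theorem Matrix.PosSemidef.trace_mul_le_trace {P W : Matrix ι ι ℝ} (hP : P.PosSemidef)
    (hW : W ∈ orthogonalGroup ι ℝ) : (P * W).trace ≤ P.trace := by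
  have hWWt : W * Wᵀ = 1 := (mem_orthogonalGroup_iff ι ℝ).1 hW
  have hWtP : (Wᵀ * P).trace = (P * W).trace := by
    rw [← trace_transpose, transpose_mul, transpose_transpose, hP.transpose_eq]
  have hWtPW : (Wᵀ * P * W).trace = P.trace := by
    rw [trace_mul_cycle, hWWt, one_mul]
  have hexpand : ((1 - W)ᴴ * P * (1 - W)).trace = 2 * (P.trace - (P * W).trace) := by
    simp only [conjTranspose_eq_transpose_of_trivial, transpose_sub, transpose_one, sub_mul,
      mul_sub, one_mul, mul_one, trace_sub, hWtP, hWtPW]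
    ring
  have := (hP.conjTranspose_mul_mul_same (1 - W)).trace_nonneg
  linarith

theorem Matrix.unitary_conj_diagonal_mul_self {α : Type*} [CommRing α] [StarRing α]
    {U : Matrix ι ι α} (hU : U ∈ unitaryGroup ι α) (d : ι → α) :
    U * diagonal d * star U * (U * diagonal d * star U) = U * diagonal (d * d) * star U := by
  calc _ = U * diagonal d * (star U * U) * diagonal d * star U := by simp only [mul_assoc]
    _ = _ := by
      rw [Unitary.star_mul_self_of_mem hU, mul_one, mul_assoc U, diagonal_mul_diagonal']
      rfl

variable {R X : Matrix ι ι ℝ}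

theorem Matrix.inv_mul_mem_orthogonalGroup (hR : IsUnit R) (hRt : Rᵀ = R)
    (hRR : R * R = X * Xᵀ) : R⁻¹ * X ∈ orthogonalGroup ι ℝ := by
  have hdet := (isUnit_iff_isUnit_det R).1 hR
  rw [mem_orthogonalGroup_iff ι ℝ, transpose_mul, transpose_nonsing_inv, hRt]
  calc R⁻¹ * X * (Xᵀ * R⁻¹) = R⁻¹ * (X * Xᵀ) * R⁻¹ := by simp only [mul_assoc]
    _ = 1 := by rw [← hRR, ← mul_assoc, nonsing_inv_mul _ hdet, one_mul, mul_nonsing_inv _ hdet]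

theorem Matrix.trace_mul_transpose_le (hR : R.PosSemidef) (hRu : IsUnit R)
    (hRR : R * R = X * Xᵀ) {Q : Matrix ι ι ℝ} (hQ : Q ∈ orthogonalGroup ι ℝ) :
    (Q * Xᵀ).trace ≤ R.trace := by
  have hQ₀ := inv_mul_mem_orthogonalGroup hRu hR.transpose_eq hRR
  have hXt : Xᵀ = (R⁻¹ * X)ᵀ * R := by
    rw [transpose_mul, transpose_nonsing_inv, hR.transpose_eq, mul_assoc,
      nonsing_inv_mul _ ((isUnit_iff_isUnit_det R).1 hRu), mul_one]
  calc (Q * Xᵀ).trace = (R * (Q * (R⁻¹ * X)ᵀ)).trace := by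
        rw [hXt, ← mul_assoc, trace_mul_comm]
    _ ≤ R.trace := hR.trace_mul_le_trace (mul_mem hQ (transpose_mem_unitaryGroup_iff.2 hQ₀))

end OrthogonalTrace

section Procrustes

variable {n : ℕ}

theorem frobNorm_sq (M : Matrix (Fin n) (Fin n) ℝ) : frobNorm M ^ 2 = (Mᵀ * M).trace :=
  Real.sq_sqrt (posSemidef_conjTranspose_mul_self M).trace_nonneg

theorem frobNorm_sub_mul_sq (S T : Matrix (Fin n) (Fin n) ℝ) {Q : Matrix (Fin n) (Fin n) ℝ}
    (hQ : Q ∈ orthogonalGroup (Fin n) ℝ) :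
    frobNorm (S - Q * T) ^ 2 = (Sᵀ * S).trace + (Tᵀ * T).trace - 2 * (Q * (T * Sᵀ)).trace := by
  have hQtQ : Qᵀ * Q = 1 := (mem_orthogonalGroup_iff' (Fin n) ℝ).1 hQ
  have hcross : (Sᵀ * (Q * T)).trace = (Q * (T * Sᵀ)).trace := by
    rw [trace_mul_comm, mul_assoc]
  have hcross' : (Tᵀ * Qᵀ * S).trace = (Q * (T * Sᵀ)).trace := by
    rw [← trace_transpose, transpose_mul, transpose_mul, transpose_transpose, transpose_transpose,
      hcross]
  have hquad : (Tᵀ * Qᵀ * (Q * T)).trace = (Tᵀ * T).trace := by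
    rw [mul_assoc, ← mul_assoc Qᵀ, hQtQ, one_mul]
  rw [frobNorm_sq, transpose_sub, transpose_mul, sub_mul, mul_sub, mul_sub, trace_sub, trace_sub,
    trace_sub, hquad, hcross, hcross']
  ring

variable {S T R : Matrix (Fin n) (Fin n) ℝ}

theorem le_frobNorm_sub_mul_sq (hR : R.PosSemidef) (hRu : IsUnit R)
    (hRR : R * R = S * Tᵀ * (S * Tᵀ)ᵀ) {Q : Matrix (Fin n) (Fin n) ℝ}
    (hQ : Q ∈ orthogonalGroup (Fin n) ℝ) :
    (Sᵀ * S).trace + (Tᵀ * T).trace - 2 * R.trace ≤ frobNorm (S - Q * T) ^ 2 := by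
  have := trace_mul_transpose_le hR hRu hRR hQ
  rw [transpose_mul, transpose_transpose] at this
  rw [frobNorm_sub_mul_sq S T hQ]
  linarith

theorem frobNorm_sub_inv_mul_mul_sq (hRt : Rᵀ = R) (hRu : IsUnit R)
    (hRR : R * R = S * Tᵀ * (S * Tᵀ)ᵀ) :
    frobNorm (S - R⁻¹ * (S * Tᵀ) * T) ^ 2 = (Sᵀ * S).trace + (Tᵀ * T).trace - 2 * R.trace := by
  have hcross : (R⁻¹ * (S * Tᵀ) * (T * Sᵀ)).trace = R.trace := by
    have hXt : T * Sᵀ = (S * Tᵀ)ᵀ := by rw [transpose_mul, transpose_transpose]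
    rw [hXt, mul_assoc, ← hRR,
      ← mul_assoc, nonsing_inv_mul _ ((isUnit_iff_isUnit_det R).1 hRu), one_mul]
  rw [frobNorm_sub_mul_sq S T (inv_mul_mem_orthogonalGroup hRu hRt hRR), hcross]

end Procrustes

section MatSqrt

variable {n : ℕ} {A : Matrix (Fin n) (Fin n) ℝ}

theorem matSqrt_posSemidef (hA : A.PosSemidef) : (matSqrt A).PosSemidef := by
  rw [matSqrt, dif_pos hA, star_eq_conjTranspose]
  refine PosSemidef.mul_mul_conjTranspose_same ?_ _
  exact posSemidef_diagonal_iff.2 fun i => Real.sqrt_nonneg _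

theorem matSqrt_mul_self (hA : A.PosSemidef) : matSqrt A * matSqrt A = A := by
  rw [matSqrt, dif_pos hA,
    unitary_conj_diagonal_mul_self hA.isHermitian.eigenvectorUnitary.2]
  conv_rhs => rw [hA.isHermitian.spectral_theorem]
  congr 3
  funext i
  simp [Real.mul_self_sqrt (hA.eigenvalues_nonneg i)]

theorem isUnit_matSqrt (hA : A.PosSemidef) (hu : IsUnit A) : IsUnit (matSqrt A) := by
  rw [isUnit_iff_isUnit_det] at hu ⊢
  rw [← matSqrt_mul_self hA, det_mul] at hu
  exact isUnit_of_mul_isUnit_left hu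

end MatSqrt

/-- For positive definite `A, B`, the minimum over orthogonal `Q` of
`‖A^{1/2} − Q B^{1/2}‖_F²` equals `Tr A + Tr B − 2 Tr((A^{1/2} B A^{1/2})^{1/2})`,
and it is attained at `Q* = (A^{1/2} B A^{1/2})^{−1/2} A^{1/2} B^{1/2}`. -/
theorem stmt6 {n : ℕ} (A B : Matrix (Fin n) (Fin n) ℝ)
    (hA : A.PosDef) (hB : B.PosDef) :
    IsLeast
      {r : ℝ | ∃ Q ∈ Matrix.orthogonalGroup (Fin n) ℝ,
        r = frobNorm (matSqrt A - Q * matSqrt B) ^ 2}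
      (A.trace + B.trace - 2 * (matSqrt (matSqrt A * B * matSqrt A)).trace) ∧
    (matSqrt (matSqrt A * B * matSqrt A))⁻¹ * matSqrt A * matSqrt B ∈
      Matrix.orthogonalGroup (Fin n) ℝ ∧
    frobNorm (matSqrt A -
        ((matSqrt (matSqrt A * B * matSqrt A))⁻¹ * matSqrt A * matSqrt B) * matSqrt B) ^ 2 =
      A.trace + B.trace - 2 * (matSqrt (matSqrt A * B * matSqrt A)).trace := by
  have hS := matSqrt_posSemidef hA.posSemidef
  have hT := matSqrt_posSemidef hB.posSemidef
  have hSS := matSqrt_mul_self hA.posSemidef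
  have hTT := matSqrt_mul_self hB.posSemidef
  have hM : (matSqrt A * B * matSqrt A).PosSemidef := by
    simpa only [hS.isHermitian.eq] using hB.posSemidef.conjTranspose_mul_mul_same (matSqrt A)
  have hMu : IsUnit (matSqrt A * B * matSqrt A) :=
    have hSu := isUnit_matSqrt hA.posSemidef hA.isUnit
    (hSu.mul hB.isUnit).mul hSu
  have hR := matSqrt_posSemidef hM
  have hRu := isUnit_matSqrt hM hMu
  have hRR : matSqrt (matSqrt A * B * matSqrt A) * matSqrt (matSqrt A * B * matSqrt A) =
      matSqrt A * (matSqrt B)ᵀ * (matSqrt A * (matSqrt B)ᵀ)ᵀ := by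
    rw [matSqrt_mul_self hM, transpose_mul, transpose_transpose, hS.transpose_eq, hT.transpose_eq]
    conv_lhs => rw [← hTT]
    simp only [mul_assoc]
  have hle := fun Q (hQ : Q ∈ orthogonalGroup (Fin n) ℝ) => le_frobNorm_sub_mul_sq hR hRu hRR hQ
  have heq := frobNorm_sub_inv_mul_mul_sq hR.transpose_eq hRu hRR
  have hmem := inv_mul_mem_orthogonalGroup hRu hR.transpose_eq hRR
  simp only [hS.transpose_eq, hT.transpose_eq, hSS, hTT, ← mul_assoc] at hle heq hmem
  refine ⟨⟨⟨_, hmem, heq.symm⟩, ?_⟩, hmem, heq⟩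
  rintro r ⟨Q, hQ, rfl⟩
  exact hle Q hQ
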